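/- Let C be a circuit with initialization x_0 and let (ι^(i))_{i ∈ [ℓ+1]} be a pivotal sequence of inputs of C over BM^m. Then for every r ∈ N there exists a pivotal sequence of states (y^(j))_{j ∈ [ℓ'+1]} over BM^{m+k+n}, each attainable by C after r rounds (each y^(j) ∈ S^C_r(ι^(i) ∘ x_0) for some i), satisfying y^(0) ∈ S^C_r(ι^(0) ∘ x_0) and y^(ℓ') ∈ S^C_r(ι^(ℓ) ∘ x_0). -/

import Mathlib

set_option linter.unusedVariables false

attribute [local instance] Classical.propDecidable

/-- Signal values: stable `zero`, `one`, and metastable `meta`. -/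
inductive BM : Type
  | zero
  | one
  | metastable
  deriving DecidableEq

/-- Embedding of stable Boolean values into `BM`. -/
def BM.ofBool : Bool → BM
  | false => BM.zero
  | true => BM.one

/-- `inResM x y` means `y ∈ ResM(x)`, the set of partial resolutions of `x`. -/
def inResM {k : ℕ} (x y : Fin k → BM) : Prop :=
  ∀ i, x i = y i ∨ x i = BM.metastable

/-- `inRes x y` means `y ∈ Res(x)`, i.e. `y` is a complete (stable) resolution of `x`. -/
def inRes {k : ℕ} (x y : Fin k → BM) : Prop :=
  inResM x y ∧ ∀ i, y i ≠ BM.metastable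

/-- The complete resolutions of `x`, viewed as Boolean words. -/
def boolRes {k : ℕ} (x : Fin k → BM) : Set (Fin k → Bool) :=
  { z | ∀ i, x i = BM.ofBool (z i) ∨ x i = BM.metastable }

/-- The metastable (Kleene) extension `f_M : BM^k → BM` of a Boolean function
`f : B^k → B`: it outputs a stable value `b` iff all complete resolutions of the
input evaluate to `b` under `f`, and `meta` otherwise. -/
noncomputable def kleene {k : ℕ} (f : (Fin k → Bool) → Bool) (x : Fin k → BM) : BM :=
  if ∀ z ∈ boolRes x, f z = false then BM.zero
  else if ∀ z ∈ boolRes x, f z = true then BM.one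
  else BM.metastable

/-- Combinational logic with `m` input nodes: formulas built from inputs,
`BM`-constants (gates of indegree 0), and gates computing the metastable extension
of a Boolean function of their in-neighbors.  (A DAG evaluates exactly like the
formula obtained by unsharing, so this faithfully captures evaluation of
combinational logic DAGs.) -/
inductive Comb (m : ℕ) : Type
  | input : Fin m → Comb m
  | const : BM → Comb m
  | gate : (j : ℕ) → ((Fin j → Bool) → Bool) → (Fin j → Comb m) → Comb m

/-- Recursive evaluation of combinational logic on input `x ∈ BM^m`. -/
noncomputable def Comb.eval {m : ℕ} (x : Fin m → BM) : Comb m → BM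
  | .input i => x i
  | .const b => b
  | .gate _ f cs => kleene f (fun t => (cs t).eval x)

/-- Register types: simple, mask-0, mask-1. -/
inductive RegType : Type
  | simple
  | mask0
  | mask1
  deriving DecidableEq

/-- `regRead t b (o, b')` holds iff a register of type `t` in state `b` can be read
with read value `o`, moving to state `b'`:  a register in a stable state yields that
state and keeps it; a simple register in state `meta` yields `meta` and stays `meta`;
a mask-`c` register in state `meta` either yields `c` staying in state `meta`, or
yields `meta` changing its state to `1 - c`. -/
def regRead : RegType → BM → BM × BM → Prop
  | _, BM.zero, p => p = (BM.zero, BM.zero)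
  | _, BM.one, p => p = (BM.one, BM.one)
  | RegType.simple, BM.metastable, p => p = (BM.metastable, BM.metastable)
  | RegType.mask0, BM.metastable, p => p = (BM.zero, BM.metastable) ∨ p = (BM.metastable, BM.one)
  | RegType.mask1, BM.metastable, p => p = (BM.one, BM.metastable) ∨ p = (BM.metastable, BM.zero)

/-- A circuit with `m` input, `k` local and `n` output registers: a type for each
register, combinational logic with `m + k` input nodes (one per non-output register)
and `k + n` output nodes (one per non-input register), and an initialization of the
non-input registers. -/
structure Circuit (m k n : ℕ) : Type where
  inType : Fin m → RegType
  locType : Fin k → RegType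
  outType : Fin n → RegType
  logic : Fin (k + n) → Comb (m + k)
  init : Fin (k + n) → BM

/-- A state of a circuit: values of input, local, and output registers. -/
structure CState (m k n : ℕ) : Type where
  inp : Fin m → BM
  loc : Fin k → BM
  out : Fin n → BM

/-- A state as a word in `BM^{m+k+n}`. -/
def CState.toVec {m k n : ℕ} (s : CState m k n) : Fin (m + (k + n)) → BM :=
  Fin.append s.inp (Fin.append s.loc s.out)

/-- Read phase: `o ∈ BM^{m+k}` are possible read values of the non-output registers
in state `s`, and `ι'` the corresponding successor states of the input registers. -/
def ReadRel {m k n : ℕ} (C : Circuit m k n) (s : CState m k n)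
    (o : Fin (m + k) → BM) (ι' : Fin m → BM) : Prop :=
  (∀ i : Fin m, regRead (C.inType i) (s.inp i) (o (Fin.castAdd k i), ι' i)) ∧
  (∀ j : Fin k, ∃ st', regRead (C.locType j) (s.loc j) (o (Fin.natAdd m j), st'))

/-- Evaluation phase: `f^G` applied to the read values. -/
noncomputable def evalLogic {m k n : ℕ} (C : Circuit m k n) (o : Fin (m + k) → BM) :
    Fin (k + n) → BM :=
  fun j => (C.logic j).eval o

/-- `Write^C(s)`: possible values written to the non-input registers. -/
def WriteSet {m k n : ℕ} (C : Circuit m k n) (s : CState m k n) :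
    Set (Fin (k + n) → BM) :=
  { w | ∃ o ι', ReadRel C s o ι' ∧ inResM (evalLogic C o) w }

/-- Successor-state relation: read all non-output registers, evaluate the logic,
and write an arbitrary partial resolution of the result to the non-input registers. -/
def Succ {m k n : ℕ} (C : Circuit m k n) (s s' : CState m k n) : Prop :=
  ∃ o ι', ReadRel C s o ι' ∧ s'.inp = ι' ∧
    inResM (evalLogic C o) (Fin.append s'.loc s'.out)

/-- `reach C r s₀ = S^C_r(s₀)`: states reachable in `r` rounds from `s₀`. -/
def reach {m k n : ℕ} (C : Circuit m k n) : ℕ → CState m k n → Set (CState m k n)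
  | 0, s => {s}
  | r + 1, s => { t | ∃ u ∈ reach C r s, Succ C u t }

/-- The initial state of `C` with input `ι`. -/
def initState {m k n : ℕ} (C : Circuit m k n) (ι : Fin m → BM) : CState m k n :=
  ⟨ι, fun j => C.init (Fin.castAdd n j), fun j => C.init (Fin.natAdd k j)⟩

/-- `C_r(ι)`: possible outputs after `r` rounds on input `ι`. -/
def Cout {m k n : ℕ} (C : Circuit m k n) (r : ℕ) (ι : Fin m → BM) :
    Set (Fin n → BM) :=
  { y | ∃ s ∈ reach C r (initState C ι), y = s.out }

/-- `r` rounds of `C` implement `f` iff `C_r(ι) ⊆ f(ι)` for all inputs `ι`. -/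
def Implements {m k n : ℕ} (C : Circuit m k n) (r : ℕ)
    (f : (Fin m → BM) → Set (Fin n → BM)) : Prop :=
  ∀ ι, Cout C r ι ⊆ f ι

/-- All registers of the circuit are simple. -/
def OnlySimple {m k n : ℕ} (C : Circuit m k n) : Prop :=
  (∀ i, C.inType i = RegType.simple) ∧ (∀ j, C.locType j = RegType.simple) ∧
    (∀ j, C.outType j = RegType.simple)

/-- `Fun_S^r`: functions implementable by `r` rounds of circuits with only simple
registers. -/
def FunS (r m n : ℕ) : Set ((Fin m → BM) → Set (Fin n → BM)) :=
  { f | ∃ k, ∃ C : Circuit m k n, OnlySimple C ∧ Implements C r f }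

/-- `Fun_M^r`: functions implementable by `r` rounds of circuits with arbitrary
register types. -/
def FunM (r m n : ℕ) : Set ((Fin m → BM) → Set (Fin n → BM)) :=
  { f | ∃ k, ∃ C : Circuit m k n, Implements C r f }

/-- A pivotal sequence over `BM^N`: consecutive elements differ in exactly one bit,
and that bit is `meta` in one of the two elements. -/
def PivotalSeq {N ℓ : ℕ} (x : Fin (ℓ + 1) → Fin N → BM) : Prop :=
  ∀ i : Fin ℓ,
    ∃ j : Fin N,
      x i.castSucc j ≠ x i.succ j ∧
      (x i.castSucc j = BM.metastable ∨ x i.succ j = BM.metastable) ∧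
      ∀ j' : Fin N, x i.castSucc j' ≠ x i.succ j' → j' = j

/-- A function `f : BM^m → Pow(BM^n)` is natural iff it is bit-wise and closed
(a product of component functions each taking values in `{{0}, {1}, BM}`)
and specific (stabilizing the input restricts the output). -/
def IsNatural {m n : ℕ} (f : (Fin m → BM) → Set (Fin n → BM)) : Prop :=
  (∃ g : Fin n → (Fin m → BM) → Set BM,
      (∀ i x, g i x = {BM.zero} ∨ g i x = {BM.one} ∨ g i x = (Set.univ : Set BM)) ∧
      (∀ x, f x = { y | ∀ i, y i ∈ g i x })) ∧
  (∀ x y, inRes x y → f y ⊆ f x)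

/-- The `i`-th component of the metastable closure of `f : B^m → B^n`. -/
noncomputable def mclosureC {m n : ℕ} (f : (Fin m → Bool) → Fin n → Bool)
    (x : Fin m → BM) (i : Fin n) : Set BM :=
  if ∀ z ∈ boolRes x, f z i = false then {BM.zero}
  else if ∀ z ∈ boolRes x, f z i = true then {BM.one}
  else Set.univ

/-- The metastable closure `[f]_M : BM^m → Pow(BM^n)` of `f : B^m → B^n`. -/
noncomputable def mclosure {m n : ℕ} (f : (Fin m → Bool) → Fin n → Bool)
    (x : Fin m → BM) : Set (Fin n → BM) :=
  { y | ∀ i, y i ∈ mclosureC f x i }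

/-!
Pivotal adjacency is adjacency in the Hasse diagram of the information order on `BM^N`
(`M` below `0` and `1`). So it suffices to show that the states reachable in `r` rounds from
the initial states form a connected set in that diagram.

Two facts drive the induction on `r`. Making one bit of a state metastable can be
simulated: each successor of the original state is matched by a successor of the new one
that is at most one bit more metastable. Hence the reach sets of adjacent states contain equal
or adjacent states. Moreover, the successors of a single state form a connected set: each of
them is joined to the least informative successor (read every register with the least
informative value, write the result of the logic unchanged). First its input registers move to
the states left by that read, then its written values are made metastable; each move stays in
an interval of the information order, and intervals are connected. The successor sets are glued
along paths in the previous reach set, and in the end the reach sets of the inputs are glued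
along the pivotal input sequence.
-/

open SimpleGraph

namespace SimpleGraph

variable {V ι α : Type*}

theorem reachable_induce_Icc [PartialOrder α] [LocallyFiniteOrder α] {a b : α} (hab : a ≤ b) :
    ((hasse α).induce (Set.Icc a b)).Reachable ⟨a, Set.left_mem_Icc.2 hab⟩
      ⟨b, Set.right_mem_Icc.2 hab⟩ := by
  induction le_iff_reflTransGen_covBy.1 hab using Relation.ReflTransGen.head_induction_on with
  | refl => rfl
  | head hac hcb ih =>
    have hcb := le_iff_reflTransGen_covBy.2 hcb
    have hac' : ((hasse α).induce (Set.Icc _ b)).Adj ⟨_, Set.left_mem_Icc.2 hab⟩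
        ⟨_, hac.le, hcb⟩ := Or.inl hac
    exact hac'.reachable.trans
      ((ih hcb).map ((hasse α).induceHomOfLE (Set.Icc_subset_Icc_left hac.le)).toHom)

theorem Preconnected.induce_iUnion {G : SimpleGraph V} {H : SimpleGraph ι} (hH : H.Preconnected)
    {F : ι → Set V} (hF : ∀ i, (G.induce (F i)).Preconnected)
    (hlink : ∀ i j, H.Adj i j → ∃ x ∈ F i, ∃ y ∈ F j, x = y ∨ G.Adj x y) :
    (G.induce (⋃ i, F i)).Preconnected := by
  have hsub := Set.subset_iUnion F
  rintro ⟨x, hx⟩ ⟨y, hy⟩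
  obtain ⟨i, hxi⟩ := Set.mem_iUnion.1 hx
  obtain ⟨j, hyj⟩ := Set.mem_iUnion.1 hy
  obtain ⟨p⟩ := hH i j
  induction p generalizing x with
  | nil => exact (hF _ ⟨x, hxi⟩ ⟨y, hyj⟩).map (G.induceHomOfLE (hsub _)).toHom
  | cons hij _ ih =>
    obtain ⟨x', hx', y', hy', hxy'⟩ := hlink _ _ hij
    have hxx' := (hF _ ⟨x, hxi⟩ ⟨x', hx'⟩).map (G.induceHomOfLE (hsub _)).toHom
    have hx'y' : (G.induce (⋃ i, F i)).Reachable ⟨x', hsub _ hx'⟩ ⟨y', hsub _ hy'⟩ := by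
      rcases hxy' with rfl | hadj
      · rfl
      · exact Adj.reachable hadj
    exact hxx'.trans (hx'y'.trans (ih _ _ hy' hyj))

theorem Reachable.exists_adj_seq {G : SimpleGraph V} {S : Set V} {a b : V} {ha : a ∈ S}
    {hb : b ∈ S} (h : (G.induce S).Reachable ⟨a, ha⟩ ⟨b, hb⟩) :
    ∃ ℓ, ∃ y : Fin (ℓ + 1) → V, (∀ i : Fin ℓ, G.Adj (y i.castSucc) (y i.succ)) ∧
      (∀ j, y j ∈ S) ∧ y 0 = a ∧ y (Fin.last ℓ) = b := by
  obtain ⟨p⟩ := h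
  exact ⟨p.length, fun j => (p.getVert j).1, fun i => by simpa using p.adj_getVert_succ i.isLt,
    fun j => (p.getVert j).2, by simp, by simp⟩

end SimpleGraph

namespace Fin

variable {α : Type*} {m n : ℕ}

theorem append_le_append_iff [Preorder α] {a c : Fin m → α} {b d : Fin n → α} :
    append a b ≤ append c d ↔ a ≤ c ∧ b ≤ d := by
  refine ⟨fun h => ⟨fun i => by simpa using h (castAdd n i),
    fun j => by simpa using h (natAdd m j)⟩, fun ⟨hac, hbd⟩ q => ?_⟩
  induction q using addCases <;> simp [hac _, hbd _]

theorem append_covBy_append_left [PartialOrder α] {x y : Fin m → α} (z : Fin n → α) (h : x ⋖ y) :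
    append x z ⋖ append y z := by
  obtain ⟨i, hi, heq⟩ := Pi.covBy_iff.1 h
  refine Pi.covBy_iff.2 ⟨castAdd n i, by simpa using hi, fun q hq => ?_⟩
  induction q using addCases with
  | left j => simpa using heq j (by rintro rfl; exact hq rfl)
  | right j => simp

theorem append_covBy_append_right [PartialOrder α] (x : Fin m → α) {y z : Fin n → α} (h : y ⋖ z) :
    append x y ⋖ append x z := by
  obtain ⟨i, hi, heq⟩ := Pi.covBy_iff.1 h
  refine Pi.covBy_iff.2 ⟨natAdd m i, by simpa using hi, fun q hq => ?_⟩
  induction q using addCases with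
  | left j => simp
  | right j => simpa using heq j (by rintro rfl; exact hq rfl)

end Fin

namespace BM

/-- The information order: `metastable` lies below both stable values, which are incomparable.
With it, `inResM x y` unfolds to `x ≤ y` in the pointwise order. -/
instance : PartialOrder BM where
  le x y := x = y ∨ x = metastable
  le_refl _ := Or.inl rfl
  le_trans x y z := by rintro (rfl | rfl) (rfl | rfl) <;> simp
  le_antisymm x y := by rintro (rfl | rfl) (h | h) <;> simp_all

instance : Fintype BM := ⟨{zero, one, metastable}, fun x => by cases x <;> simp⟩

noncomputable instance : LocallyFiniteOrder BM :=
  LocallyFiniteOrder.ofFiniteIcc fun _ _ => Set.toFinite _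

theorem le_def {x y : BM} : x ≤ y ↔ x = y ∨ x = metastable := Iff.rfl

theorem lt_iff {x y : BM} : x < y ↔ x = metastable ∧ y ≠ metastable := by
  cases x <;> cases y <;> simp [lt_iff_le_not_ge, le_def]

theorem covBy_iff {x y : BM} : x ⋖ y ↔ x = metastable ∧ y ≠ metastable :=
  ⟨fun h => lt_iff.1 h.1, fun h => ⟨lt_iff.2 h, fun _ hxc hcy => (lt_iff.1 hxc).2 (lt_iff.1 hcy).1⟩⟩

theorem wcovBy_of_le {x y : BM} (h : x ≤ y) : x ⩿ y := by
  rcases h.eq_or_lt with rfl | hlt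
  · exact WCovBy.refl x
  · exact (covBy_iff.2 (lt_iff.1 hlt)).wcovBy

end BM

theorem WCovBy.of_le_of_eq {ι : Type*} {a b x y : ι → BM} (hab : a ⩿ b) (hxy : x ≤ y)
    (h : ∀ i, a i = b i → x i = y i) : x ⩿ y := by
  rcases hab.eq_or_covBy with rfl | hcov
  · rw [funext fun i => h i (Eq.refl _)]
    exact WCovBy.refl y
  · obtain ⟨i, -, hi⟩ := Pi.covBy_iff.1 hcov
    have : Nonempty ι := ⟨i⟩
    exact Pi.wcovBy_iff.2 ⟨i, BM.wcovBy_of_le (hxy i), fun j hj => h j (hi j hj)⟩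

theorem hasse_adj_iff_pivotal {N : ℕ} {x y : Fin N → BM} :
    (hasse (Fin N → BM)).Adj x y ↔ ∃ j, x j ≠ y j ∧
      (x j = BM.metastable ∨ y j = BM.metastable) ∧ ∀ j', x j' ≠ y j' → j' = j := by
  have covBy_iff {a b : Fin N → BM} : a ⋖ b ↔ ∃ j, a j ≠ b j ∧ a j = BM.metastable ∧
      ∀ j', a j' ≠ b j' → j' = j := by
    simp only [Pi.covBy_iff, BM.covBy_iff]
    refine ⟨fun ⟨j, ⟨ha, hb⟩, h⟩ => ⟨j, ha ▸ Ne.symm (ha ▸ hb), ha, fun j' hj' => ?_⟩,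
      fun ⟨j, hne, ha, h⟩ => ⟨j, ⟨ha, ha ▸ hne.symm⟩, fun j' hj' => ?_⟩⟩
    · by_contra hne; exact hj' (h j' hne)
    · by_contra hne; exact hj' (h j' hne)
  rw [hasse_adj, covBy_iff, covBy_iff]
  constructor
  · rintro (⟨j, hne, hx, h⟩ | ⟨j, hne, hy, h⟩)
    · exact ⟨j, hne, Or.inl hx, h⟩
    · exact ⟨j, hne.symm, Or.inr hy, fun j' hj' => h j' (Ne.symm hj')⟩
  · rintro ⟨j, hne, hx | hy, h⟩
    · exact Or.inl ⟨j, hne, hx, h⟩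
    · exact Or.inr ⟨j, hne.symm, hy, fun j' hj' => h j' (Ne.symm hj')⟩

theorem pivotalSeq_iff {N ℓ : ℕ} {x : Fin (ℓ + 1) → Fin N → BM} :
    PivotalSeq x ↔ ∀ i : Fin ℓ, (hasse (Fin N → BM)).Adj (x i.castSucc) (x i.succ) := by
  simp only [PivotalSeq, hasse_adj_iff_pivotal]

theorem PivotalSeq.hasse_adj {N ℓ : ℕ} {x : Fin (ℓ + 1) → Fin N → BM} (hx : PivotalSeq x)
    {i j : Fin (ℓ + 1)} (hij : (pathGraph (ℓ + 1)).Adj i j) :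
    (hasse (Fin N → BM)).Adj (x i) (x j) := by
  have step {i j : Fin (ℓ + 1)} (h : i.val + 1 = j.val) :
      (hasse (Fin N → BM)).Adj (x i) (x j) := by
    obtain ⟨i, rfl⟩ : ∃ i' : Fin ℓ, i = i'.castSucc := ⟨⟨i, by omega⟩, rfl⟩
    obtain rfl : j = i.succ := Fin.ext (by simp [← h])
    exact pivotalSeq_iff.1 hx i
  rcases pathGraph_adj.1 hij with h | h
  · exact step h
  · exact (step h).symm

theorem boolRes_nonempty {N : ℕ} (x : Fin N → BM) : (boolRes x).Nonempty :=
  ⟨fun i => decide (x i = BM.one), fun i => by cases h : x i <;> simp [BM.ofBool, h]⟩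

theorem boolRes_anti {N : ℕ} {x y : Fin N → BM} (h : x ≤ y) : boolRes y ⊆ boolRes x := by
  intro z hz i
  rcases h i with h | h
  · exact h ▸ hz i
  · exact Or.inr h

theorem kleene_mono {N : ℕ} (f : (Fin N → Bool) → Bool) : Monotone (kleene f) := by
  intro x y hxy
  have hsub := boolRes_anti hxy
  obtain ⟨z, hz⟩ := boolRes_nonempty y
  unfold kleene
  by_cases h0 : ∀ z ∈ boolRes x, f z = false
  · rw [if_pos h0, if_pos fun z hz => h0 z (hsub hz)]
  by_cases h1 : ∀ z ∈ boolRes x, f z = true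
  · have h0' : ¬∀ z ∈ boolRes y, f z = false := fun h => by simpa [h1 z (hsub hz)] using h z hz
    rw [if_neg h0, if_pos h1, if_neg h0', if_pos fun z hz => h1 z (hsub hz)]
  · rw [if_neg h0, if_neg h1]
    exact Or.inr rfl

theorem Comb.eval_mono {N : ℕ} (c : Comb N) : Monotone fun x => c.eval x := by
  induction c with
  | input i => exact fun _ _ h => h i
  | const b => exact fun _ _ _ => le_rfl
  | gate j f cs ih => exact fun _ _ h => kleene_mono f fun t => ih t h

theorem evalLogic_mono {m k n : ℕ} (C : Circuit m k n) : Monotone (evalLogic C) :=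
  fun _ _ h j => (C.logic j).eval_mono h

namespace RegType

def botRead : RegType → BM → BM × BM
  | _, BM.zero => (BM.zero, BM.zero)
  | _, BM.one => (BM.one, BM.one)
  | simple, BM.metastable => (BM.metastable, BM.metastable)
  | mask0, BM.metastable => (BM.metastable, BM.one)
  | mask1, BM.metastable => (BM.metastable, BM.zero)

theorem regRead_botRead (t : RegType) (b : BM) : regRead t b (t.botRead b) := by
  cases t <;> cases b <;> simp [regRead, botRead]

theorem botRead_le {t : RegType} {b : BM} {p : BM × BM} (h : regRead t b p) :
    (t.botRead b).1 ≤ p.1 ∧ p.2 ≤ (t.botRead b).2 := by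
  obtain ⟨o, s⟩ := p
  cases t <;> cases b <;> cases o <;> cases s <;> simp_all [regRead, botRead, BM.le_def]

theorem exists_regRead_of_le {t : RegType} {b b' : BM} {p : BM × BM} (hb : b' ≤ b)
    (h : regRead t b p) : ∃ p', regRead t b' p' ∧ p' ≤ p ∧ (b' = b → p' = p) := by
  rcases hb with rfl | rfl
  · exact ⟨p, h, le_rfl, fun _ => rfl⟩
  obtain ⟨o, s⟩ := p
  cases t <;> cases b <;> cases o <;> cases s <;>
    simp_all [regRead, Prod.le_def, BM.le_def, or_and_right, exists_or]

end RegType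

abbrev pivotalGraph (m k n : ℕ) : SimpleGraph (CState m k n) :=
  (hasse (Fin (m + (k + n)) → BM)).comap CState.toVec

namespace CState

variable {m k n : ℕ}

def written (s : CState m k n) : Fin (k + n) → BM := Fin.append s.loc s.out

def ofSplit (ι : Fin m → BM) (w : Fin (k + n) → BM) : CState m k n :=
  ⟨ι, fun j => w (Fin.castAdd n j), fun j => w (Fin.natAdd k j)⟩

@[simp]
theorem inp_ofSplit (ι : Fin m → BM) (w : Fin (k + n) → BM) : (ofSplit ι w).inp = ι := rfl

theorem toVec_eq (s : CState m k n) : s.toVec = Fin.append s.inp s.written := rfl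

@[simp]
theorem written_ofSplit (ι : Fin m → BM) (w : Fin (k + n) → BM) :
    (ofSplit ι w).written = w :=
  Fin.append_castAdd_natAdd

theorem toVec_ofSplit (ι : Fin m → BM) (w : Fin (k + n) → BM) :
    (ofSplit ι w).toVec = Fin.append ι w := by
  rw [toVec_eq, written_ofSplit]
  rfl

theorem ofSplit_inp_written (s : CState m k n) : ofSplit s.inp s.written = s := by
  cases s
  simp [ofSplit, written]

theorem toVec_injective : Function.Injective (toVec : CState m k n → _) := by
  intro s t h
  have hinp : s.inp = t.inp := funext fun i => by simpa [toVec] using congrFun h (Fin.castAdd _ i)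
  have hw : s.written = t.written := funext fun j => by
    simpa [toVec_eq] using congrFun h (Fin.natAdd m j)
  rw [← ofSplit_inp_written s, ← ofSplit_inp_written t, hinp, hw]

def inpHom (w : Fin (k + n) → BM) : hasse (Fin m → BM) →g pivotalGraph m k n where
  toFun x := ofSplit x w
  map_rel' h := by
    simpa only [comap_adj, toVec_ofSplit, hasse_adj] using
      h.imp (Fin.append_covBy_append_left w) (Fin.append_covBy_append_left w)

def writtenHom (ι : Fin m → BM) : hasse (Fin (k + n) → BM) →g pivotalGraph m k n where
  toFun w := ofSplit ι w
  map_rel' h := by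
    simpa only [comap_adj, toVec_ofSplit, hasse_adj] using
      h.imp (Fin.append_covBy_append_right ι) (Fin.append_covBy_append_right ι)

theorem eq_or_adj_of_wcovBy {s t : CState m k n} (h : s.toVec ⩿ t.toVec) :
    s = t ∨ (pivotalGraph m k n).Adj s t :=
  h.eq_or_covBy.imp (fun h => toVec_injective h) Or.inl

end CState

open CState

namespace Circuit

variable {m k n : ℕ} (C : Circuit m k n)

def botRead (u : CState m k n) : Fin (m + k) → BM :=
  Fin.addCases (fun i => ((C.inType i).botRead (u.inp i)).1)
    (fun j => ((C.locType j).botRead (u.loc j)).1)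

def botInp (u : CState m k n) : Fin m → BM := fun i => ((C.inType i).botRead (u.inp i)).2

theorem readRel_botRead (u : CState m k n) : ReadRel C u (C.botRead u) (C.botInp u) :=
  ⟨fun i => by simpa [botRead, botInp] using RegType.regRead_botRead _ _,
    fun j => ⟨((C.locType j).botRead (u.loc j)).2,
      by simpa [botRead] using RegType.regRead_botRead _ _⟩⟩

end Circuit

section

variable {m k n : ℕ} {C : Circuit m k n}

theorem ReadRel.botRead_le {u : CState m k n} {o : Fin (m + k) → BM} {ι' : Fin m → BM}
    (h : ReadRel C u o ι') : C.botRead u ≤ o ∧ ι' ≤ C.botInp u := by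
  refine ⟨fun q => ?_, fun i => (RegType.botRead_le (h.1 i)).2⟩
  induction q using Fin.addCases with
  | left i => simpa [Circuit.botRead] using (RegType.botRead_le (h.1 i)).1
  | right j =>
    obtain ⟨_, hj⟩ := h.2 j
    simpa [Circuit.botRead] using (RegType.botRead_le hj).1

theorem ReadRel.exists_of_le {u v : CState m k n} {o : Fin (m + k) → BM} {ι' : Fin m → BM}
    (h : ReadRel C v o ι') (hinp : u.inp ≤ v.inp) (hloc : u.loc ≤ v.loc) :
    ∃ o' ι'', ReadRel C u o' ι'' ∧ o' ≤ o ∧ ι'' ≤ ι' ∧ ∀ i, u.inp i = v.inp i → ι'' i = ι' i := by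
  choose p hp hpo heq using fun i => RegType.exists_regRead_of_le (hinp i) (h.1 i)
  have hread_loc (j : Fin k) :
      ∃ q : BM × BM, regRead (C.locType j) (u.loc j) q ∧ q.1 ≤ o (Fin.natAdd m j) := by
    obtain ⟨_, hj⟩ := h.2 j
    obtain ⟨q, hq, hqo, -⟩ := RegType.exists_regRead_of_le (hloc j) hj
    exact ⟨q, hq, hqo.1⟩
  choose q hq hqo using hread_loc
  refine ⟨Fin.addCases (fun i => (p i).1) (fun j => (q j).1), fun i => (p i).2,
    ⟨fun i => by simpa using hp i, fun j => ⟨(q j).2, by simpa using hq j⟩⟩, fun x => ?_,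
    fun i => (hpo i).2, fun i hi => congrArg Prod.snd (heq i hi)⟩
  induction x using Fin.addCases with
  | left i => simpa using (hpo i).1
  | right j => simpa using hqo j

theorem succ_iff {u s : CState m k n} :
    Succ C u s ↔ ∃ o, ReadRel C u o s.inp ∧ evalLogic C o ≤ s.written :=
  ⟨fun ⟨o, _, h, hs, hw⟩ => ⟨o, hs ▸ h, hw⟩, fun ⟨o, h, hw⟩ => ⟨o, _, h, rfl, hw⟩⟩

theorem succ_ofSplit_botInp {u : CState m k n} {w : Fin (k + n) → BM}
    (hw : evalLogic C (C.botRead u) ≤ w) : Succ C u (ofSplit (C.botInp u) w) :=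
  succ_iff.2 ⟨_, C.readRel_botRead u, by rwa [written_ofSplit]⟩

theorem succ_nonempty (C : Circuit m k n) (u : CState m k n) : {t | Succ C u t}.Nonempty :=
  ⟨_, succ_ofSplit_botInp le_rfl⟩

theorem succ_ofSplit_of_le {u : CState m k n} {ι c : Fin m → BM} {w : Fin (k + n) → BM}
    (hs : Succ C u (ofSplit ι w)) (hιc : ι ≤ c) (hc : c ≤ C.botInp u) : Succ C u (ofSplit c w) := by
  obtain ⟨o, hread, hw⟩ := succ_iff.1 hs
  rw [written_ofSplit] at hw
  have hc_bot (i : Fin m) (hi : c i ≠ ι i) : c i = C.botInp u i := by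
    rcases hιc i with h | h
    · exact absurd h.symm hi
    · exact (hc i).resolve_right (h ▸ hi)
  let o' : Fin (m + k) → BM := Fin.addCases
    (fun i => if c i = ι i then o (Fin.castAdd k i) else C.botRead u (Fin.castAdd k i))
    (fun j => o (Fin.natAdd m j))
  have hread' : ReadRel C u o' c := by
    refine ⟨fun i => ?_, fun j => by simpa [o'] using hread.2 j⟩
    by_cases hi : c i = ι i
    · simpa [o', hi] using hread.1 i
    · simp only [o', Fin.addCases_left]
      rw [if_neg hi, hc_bot i hi]
      exact (C.readRel_botRead u).1 i
  have ho' : o' ≤ o := by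
    intro q
    induction q using Fin.addCases with
    | left i =>
      by_cases hi : c i = ι i
      · simp [o', hi]
      · simpa [o', hi] using hread.botRead_le.1 (Fin.castAdd k i)
    | right j => simp [o']
  exact succ_iff.2 ⟨o', hread', by rw [written_ofSplit]; exact (evalLogic_mono C ho').trans hw⟩

theorem preconnected_induce_succ (C : Circuit m k n) (u : CState m k n) :
    ((pivotalGraph m k n).induce {t | Succ C u t}).Preconnected := by
  have hbot := succ_ofSplit_botInp (C := C) (u := u) le_rfl
  suffices h : ∀ a (ha : Succ C u a),
      ((pivotalGraph m k n).induce {t | Succ C u t}).Reachable ⟨a, ha⟩ ⟨_, hbot⟩ from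
    fun x y => (h x x.2).trans (h y y.2).symm
  intro a ha
  obtain ⟨ι, w, rfl⟩ : ∃ ι w, a = ofSplit ι w := ⟨_, _, (ofSplit_inp_written a).symm⟩
  obtain ⟨o, hread, hw⟩ := succ_iff.1 ha
  rw [written_ofSplit] at hw
  have hinp : ι ≤ C.botInp u := hread.botRead_le.2
  have hE : evalLogic C (C.botRead u) ≤ w := (evalLogic_mono C hread.botRead_le.1).trans hw
  have resolve_inputs := (reachable_induce_Icc hinp).map
    (induceHom (t := {t | Succ C u t}) (inpHom w) fun _ hc => succ_ofSplit_of_le ha hc.1 hc.2)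
  have blur_written := (reachable_induce_Icc hE).map
    (induceHom (t := {t | Succ C u t}) (writtenHom (C.botInp u)) fun _ hw' =>
      succ_ofSplit_botInp hw'.1)
  exact resolve_inputs.trans blur_written.symm

theorem exists_succ_le {u v s : CState m k n} (huv : u.toVec ≤ v.toVec) (hs : Succ C v s) :
    ∃ t, Succ C u t ∧ t.toVec ≤ s.toVec ∧ ∀ q, u.toVec q = v.toVec q → t.toVec q = s.toVec q := by
  obtain ⟨o, hread, hw⟩ := succ_iff.1 hs
  obtain ⟨hinp, hloc, -⟩ : u.inp ≤ v.inp ∧ u.loc ≤ v.loc ∧ u.out ≤ v.out := by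
    simpa [toVec, Fin.append_le_append_iff] using huv
  obtain ⟨o', ι', hread', ho, hι, heq⟩ := hread.exists_of_le hinp hloc
  refine ⟨ofSplit ι' s.written, succ_iff.2 ⟨o', hread', ?_⟩, ?_, fun q hq => ?_⟩
  · rw [written_ofSplit]
    exact (evalLogic_mono C ho).trans hw
  · rw [toVec_ofSplit, toVec_eq s]
    exact Fin.append_le_append_iff.2 ⟨hι, le_rfl⟩
  · rw [toVec_ofSplit, toVec_eq s]
    induction q using Fin.addCases with
    | left i => simpa using heq i (by simpa [toVec] using hq)
    | right j => simp

theorem exists_succ_wcovBy {u v s : CState m k n} (huv : u.toVec ⩿ v.toVec) (hs : Succ C v s) :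
    ∃ t, Succ C u t ∧ t.toVec ⩿ s.toVec := by
  obtain ⟨t, ht, hle, heq⟩ := exists_succ_le huv.le hs
  exact ⟨t, ht, WCovBy.of_le_of_eq huv hle heq⟩

theorem reach_nonempty (C : Circuit m k n) (r : ℕ) (s : CState m k n) : (reach C r s).Nonempty := by
  induction r with
  | zero => exact ⟨s, rfl⟩
  | succ r ih =>
    obtain ⟨u, hu⟩ := ih
    obtain ⟨t, ht⟩ := succ_nonempty C u
    exact ⟨t, u, hu, ht⟩

theorem reach_succ_eq (C : Circuit m k n) (r : ℕ) (s : CState m k n) :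
    reach C (r + 1) s = ⋃ u : reach C r s, {t | Succ C u t} := by
  ext t
  simp [reach]

theorem exists_reach_wcovBy {u v : CState m k n} (huv : u.toVec ⩿ v.toVec) (r : ℕ) :
    ∀ s ∈ reach C r v, ∃ t ∈ reach C r u, t.toVec ⩿ s.toVec := by
  induction r with
  | zero => rintro s rfl; exact ⟨u, rfl, huv⟩
  | succ r ih =>
    rintro s ⟨s₀, hs₀, hs⟩
    obtain ⟨t₀, ht₀, hts₀⟩ := ih s₀ hs₀
    obtain ⟨t, ht, hts⟩ := exists_succ_wcovBy hts₀ hs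
    exact ⟨t, ⟨t₀, ht₀, ht⟩, hts⟩

theorem exists_link_of_adj {F : CState m k n → Set (CState m k n)} (hne : ∀ u, (F u).Nonempty)
    (htransfer : ∀ u v, u.toVec ⩿ v.toVec → ∀ s ∈ F v, ∃ t ∈ F u, t.toVec ⩿ s.toVec)
    {u v : CState m k n} (huv : (pivotalGraph m k n).Adj u v) :
    ∃ x ∈ F u, ∃ y ∈ F v, x = y ∨ (pivotalGraph m k n).Adj x y := by
  rcases huv with huv | hvu
  · obtain ⟨s, hs⟩ := hne v
    obtain ⟨t, ht, hts⟩ := htransfer u v huv.wcovBy s hs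
    exact ⟨t, ht, s, hs, eq_or_adj_of_wcovBy hts⟩
  · obtain ⟨s, hs⟩ := hne u
    obtain ⟨t, ht, hts⟩ := htransfer v u hvu.wcovBy s hs
    exact ⟨s, hs, t, ht, (eq_or_adj_of_wcovBy hts).imp Eq.symm Adj.symm⟩

theorem preconnected_induce_reach (C : Circuit m k n) (r : ℕ) (s : CState m k n) :
    ((pivotalGraph m k n).induce (reach C r s)).Preconnected := by
  induction r with
  | zero =>
    have : Subsingleton (reach C 0 s) := Set.subsingleton_singleton.coe_sort
    exact Preconnected.of_subsingleton
  | succ r ih =>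
    rw [reach_succ_eq]
    exact ih.induce_iUnion (fun u => preconnected_induce_succ C u) fun _ _ h =>
      exists_link_of_adj (succ_nonempty C) (fun _ _ huv _ hs => exists_succ_wcovBy huv hs) h

end

theorem pivotal_reachable_sequence_general {m k n ℓ : ℕ} (C : Circuit m k n)
    (ι : Fin (ℓ + 1) → Fin m → BM) (hι : PivotalSeq ι) (r : ℕ) :
    ∃ ℓ' : ℕ, ∃ y : Fin (ℓ' + 1) → CState m k n,
      PivotalSeq (fun j => (y j).toVec) ∧
      (∀ j, ∃ i, y j ∈ reach C r (initState C (ι i))) ∧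
      y 0 ∈ reach C r (initState C (ι 0)) ∧
      y (Fin.last ℓ') ∈ reach C r (initState C (ι (Fin.last ℓ))) := by
  have hlink (i j : Fin (ℓ + 1)) (hij : (pathGraph (ℓ + 1)).Adj i j) :=
    exists_link_of_adj (reach_nonempty C r) (fun _ _ huv => exists_reach_wcovBy huv r)
      -- `inpHom C.init` sends an input `x` to `initState C x`
      ((inpHom C.init).map_rel (hι.hasse_adj hij))
  have hS := (pathGraph_preconnected (ℓ + 1)).induce_iUnion
    (fun i => preconnected_induce_reach C r (initState C (ι i))) hlink
  obtain ⟨s, hs⟩ := reach_nonempty C r (initState C (ι 0))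
  obtain ⟨t, ht⟩ := reach_nonempty C r (initState C (ι (Fin.last ℓ)))
  obtain ⟨ℓ', y, hadj, hyS, rfl, rfl⟩ :=
    (hS ⟨s, Set.mem_iUnion_of_mem _ hs⟩ ⟨t, Set.mem_iUnion_of_mem _ ht⟩).exists_adj_seq
  exact ⟨ℓ', y, pivotalSeq_iff.2 hadj, fun j => Set.mem_iUnion.1 (hyS j), hs, ht⟩

/-- given a pivotal sequence of inputs `(ι^(i))_{i ∈ [ℓ+1]}` of a
circuit `C` with initialization `x_0`, for every `r ∈ ℕ` there is a pivotal sequence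
of states `(y^(j))_{j ∈ [ℓ'+1]}`, each attainable after `r` rounds from some
`ι^(i) ∘ x_0`, with `y^(0) ∈ S^C_r(ι^(0) ∘ x_0)` and `y^(ℓ') ∈ S^C_r(ι^(ℓ) ∘ x_0)`. -/
theorem pivotal_reachable_sequence {m k n ℓ : ℕ} (C : Circuit m k n)
    (ι : Fin (ℓ + 1) → Fin m → BM) (hι : PivotalSeq ι) (r : ℕ) (hr : 0 < r) :
    ∃ ℓ' : ℕ, ∃ y : Fin (ℓ' + 1) → CState m k n,
      PivotalSeq (fun j => (y j).toVec) ∧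
      (∀ j, ∃ i, y j ∈ reach C r (initState C (ι i))) ∧
      y 0 ∈ reach C r (initState C (ι 0)) ∧
      y (Fin.last ℓ') ∈ reach C r (initState C (ι (Fin.last ℓ))) :=
  pivotal_reachable_sequence_general C ι hι r
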